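/- Let n ≥ 1 and let H_0,…,H_n be n+1 affine hyperplanes in ℝ^n with normal vectors u_0,…,u_n such that any n of the vectors u_0,…,u_n are linearly independent and the intersection H_0 ∩ … ∩ H_n is empty (equivalently, the hyperplanes bound an n-simplex). Then the complement ℝ^n \ (H_0 ∪ … ∪ H_n) has exactly 2^{n+1} − 1 connected components, and exactly one of these components is bounded (namely the open simplex). -/

import Mathlib

/-!
Any `n` of the normals form a basis, so up to scale there is a single linear relation
`∑ g k • u k = 0`, and all its coefficients are nonzero; since the hyperplanes have no common
point, `d = ∑ g k * c k ≠ 0`, and we normalise `d > 0`. The affine functions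
`f k x = ⟪u k, x⟫ - c k` then satisfy `∑ g k * f k x = -d`, and `x ↦ (f k x)ₖ` maps `ℝⁿ`
bijectively onto this hyperplane of `ℝⁿ⁺¹`. The components of the complement are the nonempty
sign regions, which are open and convex. A sign pattern is realised unless it is the sign pattern
of `g`, which would make every `g k * f k x` positive. If every `g k * f k x` is negative, then
`|f k x| ≤ d / |g k|` and the region (the open simplex) is bounded; a region where both signs occur
contains a ray.
-/

open scoped RealInnerProductSpace

noncomputable section

/-- The complement in `ℝⁿ` of the union of the affine hyperplanes `{x : ⟪u k, x⟫ = c k}`. -/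
def hyperplaneComplement {n : ℕ} (u : Fin (n + 1) → EuclideanSpace ℝ (Fin n))
    (c : Fin (n + 1) → ℝ) : Set (EuclideanSpace ℝ (Fin n)) :=
  (⋃ k : Fin (n + 1), {x : EuclideanSpace ℝ (Fin n) | ⟪u k, x⟫ = c k})ᶜ

/-- The set of connected components of the complement of the hyperplane arrangement. -/
def hyperplaneComplementComponents {n : ℕ} (u : Fin (n + 1) → EuclideanSpace ℝ (Fin n))
    (c : Fin (n + 1) → ℝ) : Set (Set (EuclideanSpace ℝ (Fin n))) :=
  {C | ∃ x ∈ hyperplaneComplement u c, C = connectedComponentIn (hyperplaneComplement u c) x}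

open Set Bornology

def signOfBool (b : Bool) : ℝ := if b then 1 else -1

lemma signOfBool_mul_self (b : Bool) : signOfBool b * signOfBool b = 1 := by
  cases b <;> norm_num [signOfBool]

lemma signOfBool_mul_pos_iff {b : Bool} {r : ℝ} (hr : r ≠ 0) :
    0 < signOfBool b * r ↔ b = decide (0 < r) := by
  rcases hr.lt_or_gt with hr | hr <;> cases b <;> simp [signOfBool, hr, hr.not_gt]

lemma signOfBool_mul_neg_iff {b : Bool} {r : ℝ} (hr : r ≠ 0) :
    signOfBool b * r < 0 ↔ b ≠ decide (0 < r) := by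
  rcases hr.lt_or_gt with hr | hr <;> cases b <;> simp [signOfBool, hr, hr.not_gt]

lemma signOfBool_mul_mul_signOfBool_mul (b : Bool) (r s : ℝ) :
    (signOfBool b * r) * (signOfBool b * s) = r * s := by
  rw [mul_mul_mul_comm, signOfBool_mul_self, one_mul]

lemma signOfBool_ne_zero (b : Bool) : signOfBool b ≠ 0 := by
  cases b <;> norm_num [signOfBool]

lemma exists_signOfBool_mul_neg_iff {ι : Type*} {g : ι → ℝ} (hg0 : ∀ k, g k ≠ 0) {ε : ι → Bool} :
    (∃ k, signOfBool (ε k) * g k < 0) ↔ ε ≠ fun k => decide (0 < g k) := by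
  simp only [signOfBool_mul_neg_iff (hg0 _), Function.ne_iff]

lemma forall_signOfBool_mul_neg_iff {ι : Type*} {g : ι → ℝ} (hg0 : ∀ k, g k ≠ 0) {ε : ι → Bool} :
    (∀ k, signOfBool (ε k) * g k < 0) ↔ ε = fun k => !decide (0 < g k) := by
  simp only [signOfBool_mul_neg_iff (hg0 _), funext_iff, Bool.eq_not_iff]

section Orthant

variable {ι : Type*} [Fintype ι] {a : ι → ℝ}

lemma exists_pos_sum_mul_eq_neg {j : ι} (hj : a j < 0) {d : ℝ} (hd : 0 < d) :
    ∃ t : ι → ℝ, (∀ k, 0 < t k) ∧ ∑ k, a k * t k = -d := by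
  classical
  -- first make the sum negative by raising `t j`, then rescale
  set T := (|∑ k, a k| + 1) / -a j
  set t₀ : ι → ℝ := fun k => 1 + if k = j then T else 0
  have hT : 0 ≤ T := div_nonneg (by positivity) (by linarith)
  have ht₀ : ∀ k, 0 < t₀ k := fun k => by
    simp only [t₀]
    split_ifs <;> positivity
  have hsum : ∑ k, a k * t₀ k = ∑ k, a k - (|∑ k, a k| + 1) := by
    simp only [t₀, mul_add, mul_one, mul_ite, mul_zero, Finset.sum_add_distrib,
      Finset.sum_ite_eq', Finset.mem_univ, if_true, T]
    field_simp [hj.ne]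
    ring
  set s := -∑ k, a k * t₀ k
  have hs : 0 < s := by linarith [le_abs_self (∑ k, a k)]
  refine ⟨fun k => d / s * t₀ k, fun k => by have := ht₀ k; positivity, ?_⟩
  simp_rw [mul_left_comm _ (d / s), ← Finset.mul_sum]
  field_simp [hs.ne']
  ring

lemma exists_nonneg_ne_zero_sum_mul_eq_zero {j k : ι} (hj : a j < 0) (hk : 0 < a k) :
    ∃ t : ι → ℝ, (∀ m, 0 ≤ t m) ∧ t ≠ 0 ∧ ∑ m, a m * t m = 0 := by
  classical
  have hjk : j ≠ k := fun h => by linarith [h ▸ hj]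
  refine ⟨Pi.single j (a k) + Pi.single k (-a j), fun m => ?_, fun h => ?_, ?_⟩
  · simp only [Pi.add_apply, Pi.single_apply]
    split_ifs <;> linarith
  · have := congrFun h j
    simp [hjk] at this
    linarith
  · simp [mul_add, Finset.sum_add_distrib, Pi.single_apply]
    ring

end Orthant

lemma not_isBounded_of_forall_add_smul_mem {E : Type*} [NormedAddCommGroup E] [NormedSpace ℝ E]
    {S : Set E} {x v : E} (hv : v ≠ 0) (hS : ∀ t : ℝ, 0 ≤ t → x + t • v ∈ S) :
    ¬ IsBounded S := by
  intro hb
  obtain ⟨R, hR⟩ := hb.subset_closedBall x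
  have hR0 : 0 ≤ R := Metric.nonempty_closedBall.1 ⟨_, hR (hS 0 le_rfl)⟩
  have hv' : 0 < ‖v‖ := norm_pos_iff.2 hv
  have hfar := hR (hS ((R + 1) / ‖v‖) (by positivity))
  rw [Metric.mem_closedBall, dist_eq_norm, add_sub_cancel_left, norm_smul,
    Real.norm_of_nonneg (by positivity), div_mul_cancel₀ _ hv'.ne'] at hfar
  linarith

section Arrangement

variable {E ι : Type*} [NormedAddCommGroup E] [InnerProductSpace ℝ E]
  (u : ι → E) (c : ι → ℝ)

def signRegion (ε : ι → Bool) : Set E :=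
  {x | ∀ k, 0 < signOfBool (ε k) * (⟪u k, x⟫ - c k)}

def signPattern (x : E) : ι → Bool := fun k => decide (0 < ⟪u k, x⟫ - c k)

variable {u c}

lemma mem_signRegion_iff {x : E} {ε : ι → Bool} :
    x ∈ signRegion u c ε ↔
      x ∈ (⋃ k, {x : E | ⟪u k, x⟫ = c k})ᶜ ∧ signPattern u c x = ε := by
  simp only [signRegion, mem_ofPred_eq, mem_compl_iff, mem_iUnion, not_exists, funext_iff,
    signPattern, ← forall_and]
  refine forall_congr' fun k => ⟨fun h => ?_, fun ⟨hk, hε⟩ => ?_⟩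
  · have hk : ⟪u k, x⟫ - c k ≠ 0 := fun h0 => by simp [h0] at h
    exact ⟨fun h' => hk (sub_eq_zero.2 h'), ((signOfBool_mul_pos_iff hk).1 h).symm⟩
  · exact (signOfBool_mul_pos_iff (sub_ne_zero.2 hk)).2 hε.symm

variable (u c)

lemma isOpen_signRegion [Finite ι] (ε : ι → Bool) : IsOpen (signRegion u c ε) := by
  simp only [signRegion, ofPred_forall]
  exact isOpen_iInter_of_finite fun k => isOpen_lt continuous_const (by fun_prop)

lemma convex_signRegion (ε : ι → Bool) : Convex ℝ (signRegion u c ε) := by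
  simp only [signRegion, ofPred_forall]
  refine convex_iInter fun k => ?_
  simp only [mul_sub, sub_pos, ← real_inner_smul_left]
  exact convex_halfSpace_gt (innerₗ E _).isLinear _

lemma connectedComponentIn_eq_signRegion [Finite ι] {x : E}
    (hx : x ∈ (⋃ k, {x : E | ⟪u k, x⟫ = c k})ᶜ) :
    connectedComponentIn (⋃ k, {x : E | ⟪u k, x⟫ = c k})ᶜ x =
      signRegion u c (signPattern u c x) := by
  have hx' : x ∈ signRegion u c (signPattern u c x) := mem_signRegion_iff.2 ⟨hx, rfl⟩
  refine Subset.antisymm ?_ ((convex_signRegion u c _).isPreconnected.subset_connectedComponentIn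
    hx' fun y hy => (mem_signRegion_iff.1 hy).1)
  -- the complement is the disjoint union of the open sign regions
  refine isPreconnected_connectedComponentIn.subset_left_of_subset_union (isOpen_signRegion u c _)
    (isOpen_biUnion fun ε (_ : ε ≠ signPattern u c x) => isOpen_signRegion u c ε) ?_ ?_
    ⟨x, mem_connectedComponentIn hx, hx'⟩
  · refine disjoint_left.2 fun y hy hy' => ?_
    obtain ⟨ε, hε, hyε⟩ := mem_iUnion₂.1 hy'
    exact hε ((mem_signRegion_iff.1 hyε).2.symm.trans (mem_signRegion_iff.1 hy).2)
  · intro y hy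
    have hyZ := connectedComponentIn_subset _ _ hy
    by_cases hp : signPattern u c y = signPattern u c x
    · exact Or.inl (mem_signRegion_iff.2 ⟨hyZ, hp⟩)
    · exact Or.inr (mem_iUnion₂.2 ⟨_, hp, mem_signRegion_iff.2 ⟨hyZ, rfl⟩⟩)

lemma connectedComponentsIn_compl_eq_image_signRegion [Finite ι] :
    {C | ∃ x ∈ (⋃ k, {x : E | ⟪u k, x⟫ = c k})ᶜ,
        C = connectedComponentIn (⋃ k, {x : E | ⟪u k, x⟫ = c k})ᶜ x} =
      signRegion u c '' {ε | (signRegion u c ε).Nonempty} := by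
  ext C
  constructor
  · rintro ⟨x, hx, rfl⟩
    exact ⟨signPattern u c x, ⟨x, mem_signRegion_iff.2 ⟨hx, rfl⟩⟩,
      (connectedComponentIn_eq_signRegion u c hx).symm⟩
  · rintro ⟨ε, ⟨x, hx⟩, rfl⟩
    obtain ⟨hxZ, rfl⟩ := mem_signRegion_iff.1 hx
    exact ⟨x, hxZ, (connectedComponentIn_eq_signRegion u c hxZ).symm⟩

lemma injOn_signRegion : InjOn (signRegion u c) {ε | (signRegion u c ε).Nonempty} := by
  rintro ε ⟨x, hx⟩ ε' - h
  have hx' : x ∈ signRegion u c ε' := h ▸ hx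
  exact (mem_signRegion_iff.1 hx).2.symm.trans (mem_signRegion_iff.1 hx').2

variable {u c}

lemma add_smul_mem_signRegion {ε : ι → Bool} {x v : E} (hx : x ∈ signRegion u c ε)
    (hv : ∀ k, 0 ≤ signOfBool (ε k) * ⟪u k, v⟫) {t : ℝ} (ht : 0 ≤ t) :
    x + t • v ∈ signRegion u c ε := fun k => by
  have hk := hx k
  have hvk := hv k
  rw [inner_add_right, real_inner_smul_right]
  nlinarith

lemma injective_pi_innerₗ (hspan : Submodule.span ℝ (range u) = ⊤) :
    Function.Injective (LinearMap.pi fun k => innerₗ E (u k)) := by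
  rw [← LinearMap.ker_eq_bot, Submodule.eq_bot_iff]
  intro x hx
  have hux : ∀ k, ⟪u k, x⟫ = 0 := fun k => congrFun hx k
  have hspan_le : Submodule.span ℝ (range u) ≤ (ℝ ∙ x)ᗮ := Submodule.span_le.2 <|
    range_subset_iff.2 fun k => Submodule.mem_orthogonal_singleton_iff_inner_right.2
      (real_inner_comm x (u k) ▸ hux k)
  have hx_perp : x ∈ (ℝ ∙ x)ᗮ := hspan_le (hspan ▸ Submodule.mem_top)
  exact inner_self_eq_zero.1 (Submodule.mem_orthogonal_singleton_iff_inner_right.1 hx_perp)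

lemma isBounded_of_forall_abs_inner_le [Fintype ι] [FiniteDimensional ℝ E]
    (hspan : Submodule.span ℝ (range u) = ⊤) {S : Set E} {B : ι → ℝ}
    (hS : ∀ x ∈ S, ∀ k, |⟪u k, x⟫| ≤ B k) : IsBounded S := by
  obtain ⟨K, -, hK⟩ := (LinearMap.pi fun k => innerₗ E (u k)).injective_iff_antilipschitz.1
    (injective_pi_innerₗ hspan)
  exact (hK.isBounded_preimage (IsBounded.pi fun k => Metric.isBounded_Icc (-B k) (B k))).subset
    fun x hx k _ => abs_le.1 (hS x hx k)

lemma sum_mul_inner_eq_zero [Fintype ι] {g : ι → ℝ} (hg : ∑ k, g k • u k = 0) (x : E) :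
    ∑ k, g k * ⟪u k, x⟫ = 0 := by
  simp_rw [← real_inner_smul_left, ← sum_inner, hg, inner_zero_left]

end Arrangement

section Simplex

open Module

variable {E ι : Type*} [NormedAddCommGroup E] [InnerProductSpace ℝ E] [Fintype ι] {u : ι → E}
  {c g : ι → ℝ}

lemma span_eq_top_of_forall_linearIndependent_ne [FiniteDimensional ℝ E]
    (hcard : Fintype.card ι = finrank ℝ E + 1)
    (hind : ∀ k : ι, LinearIndependent ℝ fun m : {m // m ≠ k} => u (m : ι)) :
    Submodule.span ℝ (range u) = ⊤ := by
  classical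
  obtain ⟨k⟩ : Nonempty ι := Fintype.card_pos_iff.1 (by omega)
  refine eq_top_mono (Submodule.span_mono (range_comp_subset_range _ u))
    ((hind k).span_eq_top_of_card_eq_finrank' ?_)
  rw [Fintype.card_subtype_compl, Fintype.card_subtype_eq, hcard, Nat.add_sub_cancel]

lemma exists_sum_smul_eq_zero_and_forall_ne_zero [FiniteDimensional ℝ E]
    (hcard : Fintype.card ι = finrank ℝ E + 1)
    (hind : ∀ k : ι, LinearIndependent ℝ fun m : {m // m ≠ k} => u (m : ι)) :
    ∃ g : ι → ℝ, ∑ k, g k • u k = 0 ∧ ∀ k, g k ≠ 0 := by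
  classical
  have hdep : ¬ LinearIndependent ℝ u := fun h => by
    have := h.fintype_card_le_finrank
    omega
  obtain ⟨g, hg, i, hi⟩ := Fintype.not_linearIndependent_iff.1 hdep
  refine ⟨g, hg, fun k hk => ?_⟩
  -- a relation with `g k = 0` is a relation among the `u m` with `m ≠ k`
  have hg' : ∑ m : {m // m ≠ k}, g m • u (m : ι) = 0 := by
    rwa [Fintype.sum_eq_add_sum_subtype_ne _ k, hk, zero_smul, zero_add] at hg
  by_cases hik : i = k
  · exact hi (hik ▸ hk)
  · exact hi (Fintype.linearIndependent_iff.1 (hind k) (fun m => g m) hg' ⟨i, hik⟩)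

lemma exists_inner_eq_of_sum_mul_eq_zero (hspan : Submodule.span ℝ (range u) = ⊤)
    (hcard : Fintype.card ι = finrank ℝ E + 1) (hg : ∑ k, g k • u k = 0)
    (hg0 : g ≠ 0) {w : ι → ℝ} (hw : ∑ k, g k * w k = 0) : ∃ v, ∀ k, ⟪u k, v⟫ = w k := by
  let L : E →ₗ[ℝ] ι → ℝ := LinearMap.pi fun k => innerₗ E (u k)
  let φ : (ι → ℝ) →ₗ[ℝ] ℝ := ∑ k, g k • LinearMap.proj k
  have hφ : ∀ y, φ y = ∑ k, g k * y k := fun y => by simp [φ]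
  -- `range L` and `ker φ` both have dimension `finrank E`
  have hle : LinearMap.range L ≤ LinearMap.ker φ := by
    rintro _ ⟨x, rfl⟩
    exact (hφ _).trans (sum_mul_inner_eq_zero hg x)
  have hker : LinearMap.ker φ ≠ ⊤ := fun h => by
    classical
    obtain ⟨i, hi⟩ := Function.ne_iff.1 hg0
    have := hφ (Pi.single i 1)
    simp [LinearMap.ker_eq_top.1 h, Pi.single_apply] at this
    exact hi this.symm
  have hrange : LinearMap.range L = LinearMap.ker φ := by
    refine Submodule.eq_of_le_of_finrank_le hle ?_
    have := Submodule.finrank_lt hker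
    rw [LinearMap.finrank_range_of_inj (injective_pi_innerₗ hspan)]
    rw [finrank_fintype_fun_eq_card, hcard] at this
    omega
  obtain ⟨v, hv⟩ := hrange.ge (show w ∈ LinearMap.ker φ from (hφ w).trans hw)
  exact ⟨v, fun k => congrFun hv k⟩

lemma exists_sum_smul_eq_zero_and_sum_mul_pos [FiniteDimensional ℝ E]
    (hcard : Fintype.card ι = finrank ℝ E + 1)
    (hind : ∀ k : ι, LinearIndependent ℝ fun m : {m // m ≠ k} => u (m : ι))
    (hempty : ⋂ k, {x : E | ⟪u k, x⟫ = c k} = ∅) :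
    ∃ g : ι → ℝ, ∑ k, g k • u k = 0 ∧ (∀ k, g k ≠ 0) ∧ 0 < ∑ k, g k * c k := by
  obtain ⟨g, hg, hg0⟩ := exists_sum_smul_eq_zero_and_forall_ne_zero hcard hind
  obtain ⟨k⟩ : Nonempty ι := Fintype.card_pos_iff.1 (by omega)
  have hgc : ∑ k, g k * c k ≠ 0 := fun h => by
    obtain ⟨x, hx⟩ := exists_inner_eq_of_sum_mul_eq_zero
      (span_eq_top_of_forall_linearIndependent_ne hcard hind) hcard hg
      (fun h0 => hg0 k (congrFun h0 k)) h
    exact hempty.subset (mem_iInter.2 hx)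
  rcases hgc.lt_or_gt with h | h
  · refine ⟨-g, by simp [hg], fun k => neg_ne_zero.2 (hg0 k), ?_⟩
    simpa using h
  · exact ⟨g, hg, hg0, h⟩

lemma sum_mul_inner_sub_eq (hg : ∑ k, g k • u k = 0) (x : E) :
    ∑ k, g k * (⟪u k, x⟫ - c k) = -∑ k, g k * c k := by
  simp_rw [mul_sub, Finset.sum_sub_distrib, sum_mul_inner_eq_zero hg, zero_sub]

lemma signRegion_nonempty_iff (hspan : Submodule.span ℝ (range u) = ⊤)
    (hcard : Fintype.card ι = finrank ℝ E + 1) (hg : ∑ k, g k • u k = 0) (hg0 : g ≠ 0)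
    (hd : 0 < ∑ k, g k * c k) {ε : ι → Bool} :
    (signRegion u c ε).Nonempty ↔ ∃ k, signOfBool (ε k) * g k < 0 := by
  constructor
  · rintro ⟨x, hx⟩
    by_contra! h
    have hnonneg : 0 ≤ ∑ k, g k * (⟪u k, x⟫ - c k) := Finset.sum_nonneg fun k _ => by
      rw [← signOfBool_mul_mul_signOfBool_mul (ε k)]
      exact mul_nonneg (h k) (hx k).le
    linarith [sum_mul_inner_sub_eq (c := c) hg x]
  · rintro ⟨j, hj⟩
    obtain ⟨t, ht, hsum⟩ := exists_pos_sum_mul_eq_neg (a := fun k => signOfBool (ε k) * g k) hj hd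
    obtain ⟨x, hx⟩ := exists_inner_eq_of_sum_mul_eq_zero hspan hcard hg hg0
      (w := fun k => signOfBool (ε k) * t k + c k) (by
        simp_rw [mul_add, Finset.sum_add_distrib, mul_left_comm (g _), ← mul_assoc, hsum,
          neg_add_cancel])
    refine ⟨x, fun k => ?_⟩
    rw [hx, add_sub_cancel_right, ← mul_assoc, signOfBool_mul_self, one_mul]
    exact ht k

lemma isBounded_signRegion [FiniteDimensional ℝ E] (hspan : Submodule.span ℝ (range u) = ⊤)
    (hg : ∑ k, g k • u k = 0) {ε : ι → Bool} (hε : ∀ k, signOfBool (ε k) * g k < 0) :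
    IsBounded (signRegion u c ε) := by
  refine isBounded_of_forall_abs_inner_le hspan
    (B := fun k => (∑ m, g m * c m) / |g k| + |c k|) fun x hx k => ?_
  have hneg : ∀ m, g m * (⟪u m, x⟫ - c m) < 0 := fun m => by
    rw [← signOfBool_mul_mul_signOfBool_mul (ε m)]
    exact mul_neg_of_neg_of_pos (hε m) (hx m)
  have hle : -(g k * (⟪u k, x⟫ - c k)) ≤ ∑ m, g m * c m := by
    have := Finset.single_le_sum (f := fun m => -(g m * (⟪u m, x⟫ - c m)))
      (fun m _ => (neg_pos.2 (hneg m)).le) (Finset.mem_univ k)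
    simpa [Finset.sum_neg_distrib, sum_mul_inner_sub_eq hg x] using this
  have hgk : 0 < |g k| := abs_pos.2 fun h => by simpa [h] using hε k
  have hdiff : |⟪u k, x⟫ - c k| ≤ (∑ m, g m * c m) / |g k| := by
    rw [le_div_iff₀ hgk, ← abs_mul, mul_comm, abs_of_neg (hneg k)]
    exact hle
  calc |⟪u k, x⟫| = |(⟪u k, x⟫ - c k) + c k| := by rw [sub_add_cancel]
    _ ≤ |⟪u k, x⟫ - c k| + |c k| := abs_add_le _ _
    _ ≤ _ := by gcongr

lemma not_isBounded_signRegion (hspan : Submodule.span ℝ (range u) = ⊤)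
    (hcard : Fintype.card ι = finrank ℝ E + 1) (hg : ∑ k, g k • u k = 0) (hg0 : g ≠ 0)
    (hd : 0 < ∑ k, g k * c k) {ε : ι → Bool} {j k : ι}
    (hj : signOfBool (ε j) * g j < 0) (hk : 0 < signOfBool (ε k) * g k) :
    ¬ IsBounded (signRegion u c ε) := by
  obtain ⟨x, hx⟩ := (signRegion_nonempty_iff hspan hcard hg hg0 hd).2 ⟨j, hj⟩
  obtain ⟨t, ht, ht0, hsum⟩ := exists_nonneg_ne_zero_sum_mul_eq_zero
    (a := fun m => signOfBool (ε m) * g m) hj hk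
  obtain ⟨v, hv⟩ := exists_inner_eq_of_sum_mul_eq_zero hspan hcard hg hg0
    (w := fun m => signOfBool (ε m) * t m) (by
      simp_rw [← mul_assoc, mul_comm (g _)]
      exact hsum)
  have hvε : ∀ m, signOfBool (ε m) * ⟪u m, v⟫ = t m := fun m => by
    rw [hv, ← mul_assoc, signOfBool_mul_self, one_mul]
  have hv0 : v ≠ 0 := by
    rintro rfl
    exact ht0 (funext fun m => by simpa using (hvε m).symm)
  exact not_isBounded_of_forall_add_smul_mem hv0 fun s hs =>
    add_smul_mem_signRegion hx (fun m => hvε m ▸ ht m) hs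

lemma setOf_signRegion_nonempty_eq (hspan : Submodule.span ℝ (range u) = ⊤)
    (hcard : Fintype.card ι = finrank ℝ E + 1) (hg : ∑ k, g k • u k = 0) (hg0 : ∀ k, g k ≠ 0)
    (hd : 0 < ∑ k, g k * c k) :
    {ε | (signRegion u c ε).Nonempty} = {fun k => decide (0 < g k)}ᶜ := by
  obtain ⟨i⟩ : Nonempty ι := Fintype.card_pos_iff.1 (by omega)
  ext ε
  exact (signRegion_nonempty_iff hspan hcard hg (fun h => hg0 i (congrFun h i)) hd).trans
    (exists_signOfBool_mul_neg_iff hg0)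

lemma signRegion_nonempty_and_isBounded_iff [FiniteDimensional ℝ E]
    (hspan : Submodule.span ℝ (range u) = ⊤) (hcard : Fintype.card ι = finrank ℝ E + 1)
    (hg : ∑ k, g k • u k = 0) (hg0 : ∀ k, g k ≠ 0) (hd : 0 < ∑ k, g k * c k) {ε : ι → Bool} :
    (signRegion u c ε).Nonempty ∧ IsBounded (signRegion u c ε) ↔
      ε = fun k => !decide (0 < g k) := by
  obtain ⟨i⟩ : Nonempty ι := Fintype.card_pos_iff.1 (by omega)
  have hg0' : g ≠ 0 := fun h => hg0 i (congrFun h i)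
  rw [← forall_signOfBool_mul_neg_iff hg0]
  refine ⟨fun ⟨hne, hb⟩ k => ?_, fun h => ⟨?_, isBounded_signRegion hspan hg h⟩⟩
  · obtain ⟨j, hj⟩ := (signRegion_nonempty_iff hspan hcard hg hg0' hd).1 hne
    by_contra! hk
    exact not_isBounded_signRegion hspan hcard hg hg0' hd hj
      (hk.lt_of_ne (mul_ne_zero (signOfBool_ne_zero _) (hg0 k)).symm) hb
  · exact (signRegion_nonempty_iff hspan hcard hg hg0' hd).2 ⟨i, h i⟩

end Simplex

theorem simplex_hyperplane_arrangement_general {n : ℕ}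
    (u : Fin (n + 1) → EuclideanSpace ℝ (Fin n)) (c : Fin (n + 1) → ℝ)
    (hind : ∀ k : Fin (n + 1),
      LinearIndependent ℝ (fun m : {m : Fin (n + 1) // m ≠ k} => u (m : Fin (n + 1))))
    (hempty : (⋂ k : Fin (n + 1), {x : EuclideanSpace ℝ (Fin n) | ⟪u k, x⟫ = c k}) = ∅) :
    (hyperplaneComplementComponents u c).ncard = 2 ^ (n + 1) - 1 ∧
      ∃! C : Set (EuclideanSpace ℝ (Fin n)),
        C ∈ hyperplaneComplementComponents u c ∧ Bornology.IsBounded C := by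
  have hcard : Fintype.card (Fin (n + 1)) = Module.finrank ℝ (EuclideanSpace ℝ (Fin n)) + 1 := by
    simp
  have hspan := span_eq_top_of_forall_linearIndependent_ne hcard hind
  obtain ⟨g, hg, hg0, hd⟩ := exists_sum_smul_eq_zero_and_sum_mul_pos hcard hind hempty
  have hcomp : hyperplaneComplementComponents u c =
      signRegion u c '' {ε | (signRegion u c ε).Nonempty} :=
    connectedComponentsIn_compl_eq_image_signRegion u c
  have hbounded := fun ε => signRegion_nonempty_and_isBounded_iff (ε := ε) hspan hcard hg hg0 hd
  rw [hcomp]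
  obtain ⟨hne, hb⟩ := (hbounded fun k => !decide (0 < g k)).2 rfl
  refine ⟨?_, ⟨_, ⟨mem_image_of_mem (signRegion u c) hne, hb⟩, ?_⟩⟩
  · rw [(injOn_signRegion u c).ncard_image, setOf_signRegion_nonempty_eq hspan hcard hg hg0 hd,
      ncard_compl, ncard_singleton]
    simp
  · rintro _ ⟨⟨ε, hε, rfl⟩, hb⟩
    rw [(hbounded ε).1 ⟨hε, hb⟩]

/-- Let `H 0, …, H n` be `n + 1` affine hyperplanes in `ℝⁿ`,
`H k = {x : ⟪u k, x⟫ = c k}`, such that any `n` of the normal vectors `u k` are linearly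
independent and `H 0 ∩ ⋯ ∩ H n = ∅` (so the hyperplanes bound an `n`-simplex).  Then the
complement of `H 0 ∪ ⋯ ∪ H n` has exactly `2^(n+1) - 1` connected components, exactly one of
which is bounded (namely the open simplex). -/
theorem simplex_hyperplane_arrangement {n : ℕ} (hn : 1 ≤ n)
    (u : Fin (n + 1) → EuclideanSpace ℝ (Fin n)) (c : Fin (n + 1) → ℝ)
    (hu : ∀ k, u k ≠ 0)
    (hind : ∀ k : Fin (n + 1),
      LinearIndependent ℝ (fun m : {m : Fin (n + 1) // m ≠ k} => u (m : Fin (n + 1))))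
    (hempty : (⋂ k : Fin (n + 1), {x : EuclideanSpace ℝ (Fin n) | ⟪u k, x⟫ = c k}) = ∅) :
    (hyperplaneComplementComponents u c).ncard = 2 ^ (n + 1) - 1 ∧
      ∃! C : Set (EuclideanSpace ℝ (Fin n)),
        C ∈ hyperplaneComplementComponents u c ∧ Bornology.IsBounded C :=
  simplex_hyperplane_arrangement_general u c hind hempty
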